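/- Let J(θ) = Σⱼ F(θⱼ) with F a weakly convex sparsity inducing function with parameter ζ > 0, let l be the empirical logistic loss with centered data (Σᵢ x⁽ⁱ⁾ = 0), and set s = Σ_{i: y⁽ⁱ⁾=1} x⁽ⁱ⁾. If β > ‖s‖_∞ / F'₊(0), then 0 is a local minimum of θ ↦ l(θ) + βJ(θ). -/

import Mathlib

/-!
Since `log (1 + eᵃ) ≥ log 2 + a / 2` (AM–GM), the loss is bounded below by its value at `0`
plus a linear form in `θ`; for centered data that form is `-⟪θ, s⟫ ≥ -‖s‖∞ ‖θ‖₁`. On the other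
hand, convexity of `F + ζ t²` gives `F t ≥ F'₊(0) |t| - ζ t²`, so near `0` the penalty
`β ∑ F (θⱼ)` dominates `(β F'₊(0) - ε) ‖θ‖₁` for every `ε > 0`, which beats `‖s‖∞ ‖θ‖₁` when
`β F'₊(0) > ‖s‖∞`.
-/

open scoped RealInnerProductSpace BigOperators Classical

noncomputable def logisticLoss {d N : ℕ} (x : Fin N → EuclideanSpace ℝ (Fin d))
    (y : Fin N → ℝ) (θ : EuclideanSpace ℝ (Fin d)) : ℝ :=
  ∑ i, (Real.log (1 + Real.exp ⟪θ, x i⟫) - y i * ⟪θ, x i⟫)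

open Real Set Finset

theorem Real.log_two_add_half_le_log_one_add_exp (a : ℝ) :
    log 2 + a / 2 ≤ log (1 + exp a) := by
  have hamgm : 2 * exp (a / 2) ≤ 1 + exp a := by
    have hsq : exp a = exp (a / 2) ^ 2 := by rw [← exp_nat_mul]; ring_nf
    nlinarith [sq_nonneg (1 - exp (a / 2))]
  calc log 2 + a / 2 = log (2 * exp (a / 2)) := by
        rw [log_mul two_ne_zero (exp_ne_zero _), log_exp]
    _ ≤ log (1 + exp a) := log_le_log (by positivity) hamgm

theorem add_mul_abs_sub_le_of_convexOn_add_sq {F : ℝ → ℝ} {ζ D : ℝ}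
    (hconv : ConvexOn ℝ univ (fun t => F t + ζ * t ^ 2))
    (hderiv : HasDerivWithinAt F D (Ici 0) 0) (heven : ∀ t, F (-t) = F t) (t : ℝ) :
    F 0 + D * |t| - ζ * t ^ 2 ≤ F t := by
  have habs : F |t| = F t := by
    rcases abs_choice t with h | h <;> rw [h]; exact heven t
  rcases (abs_nonneg t).eq_or_lt with h | hpos
  · simp [abs_eq_zero.mp h.symm]
  have hderiv' : HasDerivWithinAt (fun t => F t + ζ * t ^ 2) D (Ioi 0) 0 := by
    have hsq := ((hasDerivAt_pow 2 (0 : ℝ)).const_mul ζ).hasDerivWithinAt (s := Ici 0)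
    simpa using (hderiv.fun_add hsq).Ioi_of_Ici
  have hslope := hconv.le_slope_of_hasDerivWithinAt_Ioi (mem_univ 0) (mem_univ |t|) hpos hderiv'
  rw [slope_def_field, sub_zero, le_div_iff₀ hpos, zero_pow two_ne_zero, mul_zero, add_zero]
    at hslope
  rw [← sq_abs t, ← habs]
  linarith

theorem sub_mul_abs_le_of_convexOn_add_sq {F : ℝ → ℝ} {ζ D δ t : ℝ}
    (hconv : ConvexOn ℝ univ (fun t => F t + ζ * t ^ 2))
    (hderiv : HasDerivWithinAt F D (Ici 0) 0) (heven : ∀ t, F (-t) = F t)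
    (hζ : 0 ≤ ζ) (ht : |t| ≤ δ) :
    (D - ζ * δ) * |t| ≤ F t - F 0 := by
  have := add_mul_abs_sub_le_of_convexOn_add_sq hconv hderiv heven t
  have : ζ * t ^ 2 ≤ ζ * δ * |t| := by
    rw [← sq_abs, sq, ← mul_assoc]
    exact mul_le_mul_of_nonneg_right (mul_le_mul_of_nonneg_left ht hζ) (abs_nonneg t)
  linarith

theorem Finset.sum_smul_eq_sum_filter_eq_one {ι R M : Type*} [Semiring R] [Nontrivial R]
    [AddCommMonoid M] [Module R M] (s : Finset ι) (y : ι → R) (hy : ∀ i, y i = 0 ∨ y i = 1)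
    (x : ι → M) :
    ∑ i ∈ s, y i • x i = ∑ i ∈ s.filter (fun i => y i = 1), x i := by
  rw [sum_filter]
  refine sum_congr rfl fun i _ => ?_
  rcases hy i with h | h <;> simp [h]

theorem EuclideanSpace.inner_le_norm_ofLp_mul_sum_abs {ι : Type*} [Fintype ι]
    (θ s : EuclideanSpace ℝ ι) : ⟪θ, s⟫ ≤ ‖s.ofLp‖ * ∑ j, |θ j| := by
  rw [PiLp.inner_apply, mul_sum]
  refine sum_le_sum fun j _ => ?_
  calc ⟪θ j, s j⟫ = s j * θ j := rfl
    _ ≤ |s j| * |θ j| := by rw [← abs_mul]; exact le_abs_self _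
    _ ≤ ‖s.ofLp‖ * |θ j| :=
        mul_le_mul_of_nonneg_right (norm_le_pi_norm s.ofLp j) (abs_nonneg _)

theorem logisticLoss_zero {d N : ℕ} (x : Fin N → EuclideanSpace ℝ (Fin d)) (y : Fin N → ℝ) :
    logisticLoss x y 0 = N * log 2 := by
  simp [logisticLoss, one_add_one_eq_two]

theorem logisticLoss_zero_sub_inner_le {d N : ℕ} (x : Fin N → EuclideanSpace ℝ (Fin d))
    (y : Fin N → ℝ) (hcentered : ∑ i, x i = 0) (θ : EuclideanSpace ℝ (Fin d)) :
    logisticLoss x y 0 - ⟪θ, ∑ i, y i • x i⟫ ≤ logisticLoss x y θ := by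
  have hlin : ∑ i, (⟪θ, x i⟫ / 2 - y i * ⟪θ, x i⟫) = - ⟪θ, ∑ i, y i • x i⟫ := by
    rw [sum_sub_distrib, ← sum_div, ← inner_sum, hcentered, inner_zero_right]
    simp [inner_sum, inner_smul_right]
  calc logisticLoss x y 0 - ⟪θ, ∑ i, y i • x i⟫
      = ∑ i, (log 2 + (⟪θ, x i⟫ / 2 - y i * ⟪θ, x i⟫)) := by
        rw [sum_add_distrib, hlin, logisticLoss_zero]; simp [sub_eq_add_neg]
    _ ≤ logisticLoss x y θ := sum_le_sum fun i _ => by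
        linarith [log_two_add_half_le_log_one_add_exp ⟪θ, x i⟫]

theorem zero_isLocalMin_of_beta_large_general {d N : ℕ}
    (x : Fin N → EuclideanSpace ℝ (Fin d)) (y : Fin N → ℝ)
    (hy : ∀ i, y i = 0 ∨ y i = 1)
    (hcentered : ∑ i, x i = 0)
    (F : ℝ → ℝ) (ζ : ℝ) (hζ : 0 < ζ)
    (heven : ∀ t, F (-t) = F t)
    (h0 : F 0 = 0)
    (hH : ConvexOn ℝ Set.univ (fun t => F t + ζ * t ^ 2))
    (D : ℝ) (hderiv : HasDerivWithinAt F D (Set.Ici 0) 0) (hD : 0 < D)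
    (β : ℝ)
    (hβ : β > ‖(fun j => (∑ i ∈ Finset.univ.filter (fun i => y i = 1), x i) j :
        Fin d → ℝ)‖ / D) :
    IsLocalMin (fun θ : EuclideanSpace ℝ (Fin d) =>
      logisticLoss x y θ + β * ∑ j, F (θ j)) 0 := by
  set s := ∑ i ∈ Finset.univ.filter (fun i => y i = 1), x i
  have hβpos : 0 < β := (div_nonneg (norm_nonneg _) hD.le).trans_lt hβ
  have hsβ : ‖s.ofLp‖ / β < D := by rwa [div_lt_iff₀ hβpos, mul_comm, ← div_lt_iff₀ hD]
  -- on the cube of side `δ`, the lower bound `F t ≥ (D - ζ δ) |t|` has slope exactly `‖s‖∞ / β`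
  set δ := (D - ‖s.ofLp‖ / β) / ζ
  have hslope : D - ζ * δ = ‖s.ofLp‖ / β := by rw [mul_div_cancel₀ _ hζ.ne']; ring
  filter_upwards [Metric.ball_mem_nhds 0 (div_pos (sub_pos.mpr hsβ) hζ)] with θ hθ
  have hpenalty : ‖s.ofLp‖ * ∑ j, |θ j| ≤ β * ∑ j, F (θ j) := by
    rw [mul_sum, mul_sum]
    refine sum_le_sum fun j _ => ?_
    have hθj : |θ j| ≤ δ := ((PiLp.norm_apply_le θ j).trans_lt (mem_ball_zero_iff.mp hθ)).le
    have := sub_mul_abs_le_of_convexOn_add_sq hH hderiv heven hζ.le hθj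
    rw [hslope, h0, sub_zero, div_mul_eq_mul_div, div_le_iff₀ hβpos] at this
    linarith
  have hloss := logisticLoss_zero_sub_inner_le x y hcentered θ
  rw [sum_smul_eq_sum_filter_eq_one univ y hy x] at hloss
  have hinner := EuclideanSpace.inner_le_norm_ofLp_mul_sum_abs θ s
  simp only [PiLp.zero_apply, h0, sum_const_zero, mul_zero, add_zero]
  linarith

theorem zero_isLocalMin_of_beta_large {d N : ℕ}
    (x : Fin N → EuclideanSpace ℝ (Fin d)) (y : Fin N → ℝ)
    (hy : ∀ i, y i = 0 ∨ y i = 1)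
    (hcentered : ∑ i, x i = 0)
    (F : ℝ → ℝ) (ζ : ℝ) (hζ : 0 < ζ)
    (hnonneg : ∀ t, 0 ≤ F t)
    (heven : ∀ t, F (-t) = F t)
    (h0 : F 0 = 0)
    (hmono : MonotoneOn F (Set.Ici 0))
    (hratio : AntitoneOn (fun t => F t / t) (Set.Ioi 0))
    (hH : ConvexOn ℝ Set.univ (fun t => F t + ζ * t ^ 2))
    (D : ℝ) (hderiv : HasDerivWithinAt F D (Set.Ici 0) 0) (hD : 0 < D)
    (β : ℝ)
    (hβ : β > ‖(fun j => (∑ i ∈ Finset.univ.filter (fun i => y i = 1), x i) j :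
        Fin d → ℝ)‖ / D) :
    IsLocalMin (fun θ : EuclideanSpace ℝ (Fin d) =>
      logisticLoss x y θ + β * ∑ j, F (θ j)) 0 :=
  zero_isLocalMin_of_beta_large_general x y hy hcentered F ζ hζ heven h0 hH D hderiv hD β hβ
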